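/- Let P=(I,V,E) be an iSOPAG and D⊆I∪V. Then there exists a partial order ≺ on the buckets of the induced subgraph P_D such that for all distinct buckets 𝔸,𝔹 of P_D with 𝔸⊆PoAn_{P_D}(𝔹) one has 𝔸≺𝔹. In particular, for distinct buckets 𝔸,𝔹 of P_D, it cannot happen simultaneously that a potentially directed path runs from a node of 𝔸 to a node of 𝔹 and a potentially directed path runs from a node of 𝔹 to a node of 𝔸. -/

import Mathlib

noncomputable section
open Classical

/-- Edge-endpoint marks: tail `−`, arrowhead `>`, or circle `∘`. -/
inductive Mark : Type
  | tail
  | arrow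
  | circle
  deriving DecidableEq

/-- A mixed graph with input nodes over a node type `N`, as raw data.
`mark a b` is the mark at `a` on the (unique) edge between `a` and `b`,
or `none` if there is no edge between `a` and `b`. -/
structure MixedGraph (N : Type) where
  inputs : Set N
  outputs : Set N
  mark : N → N → Option Mark

namespace MixedGraph

variable {N N' : Type}

/-- All nodes of the graph. -/
def nodes (G : MixedGraph N) : Set N := G.inputs ∪ G.outputs

/-- `a` and `b` are adjacent (joined by an edge). -/
def adj (G : MixedGraph N) (a b : N) : Prop := (G.mark a b).isSome

/-- Directed edge `a → b`: tail at `a`, arrowhead at `b`. -/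
def dir (G : MixedGraph N) (a b : N) : Prop :=
  G.mark a b = some Mark.tail ∧ G.mark b a = some Mark.arrow

/-- Bidirected edge `a ↔ b`. -/
def bidir (G : MixedGraph N) (a b : N) : Prop :=
  G.mark a b = some Mark.arrow ∧ G.mark b a = some Mark.arrow

/-- Undirected edge `a − b`. -/
def undir (G : MixedGraph N) (a b : N) : Prop :=
  G.mark a b = some Mark.tail ∧ G.mark b a = some Mark.tail

/-- Edge `a ∘→ b`: circle at `a`, arrowhead at `b`. -/
def circArrow (G : MixedGraph N) (a b : N) : Prop :=
  G.mark a b = some Mark.circle ∧ G.mark b a = some Mark.arrow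

/-- Edge `a ∘−∘ b`: circles at both ends. -/
def circCirc (G : MixedGraph N) (a b : N) : Prop :=
  G.mark a b = some Mark.circle ∧ G.mark b a = some Mark.circle

/-- Edge `a ∘− b`: circle at `a`, tail at `b`. -/
def circTail (G : MixedGraph N) (a b : N) : Prop :=
  G.mark a b = some Mark.circle ∧ G.mark b a = some Mark.tail

/-- Edge `a −∘ b`: tail at `a`, circle at `b`. -/
def tailCirc (G : MixedGraph N) (a b : N) : Prop :=
  G.mark a b = some Mark.tail ∧ G.mark b a = some Mark.circle

/-- Some edge of `G` carries an arrowhead at `a`. -/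
def arrowAt (G : MixedGraph N) (a : N) : Prop :=
  ∃ b, G.mark a b = some Mark.arrow

/-- `a` is an ancestor of `b`: `a = b` or a directed path `a → ⋯ → b` exists. -/
def anc (G : MixedGraph N) : N → N → Prop := Relation.ReflTransGen G.dir

/-- The ancestors of a set `S` of nodes. -/
def ancSet (G : MixedGraph N) (S : Set N) : Set N := {a | ∃ s ∈ S, G.anc a s}

/-- Potentially directed edge from `a` towards `b`: an edge with no arrowhead at its
earlier endpoint `a` and no tail at its later endpoint `b`. -/
def potDir (G : MixedGraph N) (a b : N) : Prop :=
  G.adj a b ∧ G.mark a b ≠ some Mark.arrow ∧ G.mark b a ≠ some Mark.tail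

/-- `a` is a possible ancestor of `b`: `a = b` or a potentially directed path runs
from `a` to `b`. -/
def poAn (G : MixedGraph N) : N → N → Prop := Relation.ReflTransGen G.potDir

/-- The possible ancestors of a set `S` of nodes. -/
def poAnSet (G : MixedGraph N) (S : Set N) : Set N := {a | ∃ s ∈ S, G.poAn a s}

/-- Well-formedness of a mixed graph with input nodes: inputs and outputs are disjoint
finite sets, edges are symmetric and irreflexive and join nodes of the graph. -/
def WF (G : MixedGraph N) : Prop :=
  Disjoint G.inputs G.outputs ∧ G.inputs.Finite ∧ G.outputs.Finite ∧
  (∀ a b, (G.mark a b).isSome → (G.mark b a).isSome) ∧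
  (∀ a, G.mark a a = none) ∧
  (∀ a b, (G.mark a b).isSome → a ∈ G.nodes ∧ b ∈ G.nodes)

/-- The induced subgraph of `G` over the node set `A`. -/
def induce (G : MixedGraph N) (A : Set N) : MixedGraph N where
  inputs := G.inputs ∩ A
  outputs := G.outputs ∩ A
  mark := fun a b => if a ∈ A ∧ b ∈ A then G.mark a b else none

/-- Transport a mixed graph over `N` to one over `N ⊕ N'` along `Sum.inl`. -/
def sumInl (G : MixedGraph N) : MixedGraph (N ⊕ N') where
  inputs := Sum.inl '' G.inputs
  outputs := Sum.inl '' G.outputs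
  mark := fun x y =>
    match x, y with
    | Sum.inl a, Sum.inl b => G.mark a b
    | _, _ => none

/-- `G` is a subgraph of `H`: its nodes and marked edges are among those of `H`. -/
def Subgraph (G H : MixedGraph N) : Prop :=
  G.inputs ⊆ H.inputs ∧ G.outputs ⊆ H.outputs ∧
  ∀ a b m, G.mark a b = some m → H.mark a b = some m

end MixedGraph

/-- A walk in `G` with `len` edges, visiting the nodes `f 0, …, f len`
(consecutive nodes are adjacent). -/
structure GWalk {N : Type} (G : MixedGraph N) where
  len : ℕ
  f : ℕ → N
  hadj : ∀ i < len, G.adj (f i) (f (i + 1))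

namespace GWalk

variable {N : Type} {G : MixedGraph N}

/-- The first node of the walk. -/
def first (w : GWalk G) : N := w.f 0

/-- The last node of the walk. -/
def last (w : GWalk G) : N := w.f w.len

/-- The walk is a path: no repeated nodes. -/
def IsPath (w : GWalk G) : Prop :=
  ∀ i ≤ w.len, ∀ j ≤ w.len, w.f i = w.f j → i = j

/-- The (interior) node at position `i` is a collider on the walk: both incident
edges carry arrowheads at it. -/
def ColliderAt (w : GWalk G) (i : ℕ) : Prop :=
  G.mark (w.f i) (w.f (i - 1)) = some Mark.arrow ∧
  G.mark (w.f i) (w.f (i + 1)) = some Mark.arrow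

end GWalk

namespace MixedGraph

variable {N : Type}

/-- `w` is an `(L,S)`-inducing walk: every non-endnode is in `L` or a collider, and
every collider lies in `Anc({first, last} ∪ S)`. -/
def InducingWalk (G : MixedGraph N) (L S : Set N) (w : GWalk G) : Prop :=
  (∀ i, 0 < i → i < w.len → w.f i ∈ L ∨ w.ColliderAt i) ∧
  (∀ i, 0 < i → i < w.len → w.ColliderAt i →
    w.f i ∈ G.ancSet ({w.first, w.last} ∪ S))

/-- There is an `(L,S)`-inducing walk from `a` to `b` in `G`. -/
def InducingWalkBtw (G : MixedGraph N) (L S : Set N) (a b : N) : Prop :=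
  ∃ w : GWalk G, w.first = a ∧ w.last = b ∧ G.InducingWalk L S w

/-- There is an `(L,S)`-inducing path from `a` to `b` in `G`. -/
def InducingPathBtw (G : MixedGraph N) (L S : Set N) (a b : N) : Prop :=
  ∃ w : GWalk G, w.IsPath ∧ w.first = a ∧ w.last = b ∧ G.InducingWalk L S w

/-- `G` is an iADMG: all edges directed or bidirected, no directed cycles, no
arrowheads at input nodes, and no edges between two input nodes. -/
def IsIADMG (G : MixedGraph N) : Prop :=
  G.WF ∧
  (∀ a b, G.adj a b → G.dir a b ∨ G.dir b a ∨ G.bidir a b) ∧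
  (∀ a b, G.dir a b → ¬ G.anc b a) ∧
  (∀ a ∈ G.inputs, ∀ b, G.mark a b ≠ some Mark.arrow) ∧
  (∀ a ∈ G.inputs, ∀ b ∈ G.inputs, ¬ G.adj a b)

/-- `G` is an iPAG. -/
def IsIPAG (G : MixedGraph N) : Prop :=
  G.WF ∧
  (∀ a ∈ G.inputs, ∀ b, G.mark a b ≠ some Mark.arrow) ∧
  (∀ a ∈ G.inputs, ∀ b ∈ G.inputs, ¬ G.adj a b) ∧
  (∀ a b, G.dir a b → ¬ G.anc b a) ∧
  (∀ a b, G.anc a b → ¬ G.bidir b a) ∧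
  (∀ a b c, G.mark b a = some Mark.arrow → ¬ G.undir b c) ∧
  (∀ a b, a ≠ b → a ∈ G.nodes → b ∈ G.nodes → ¬ G.adj a b →
    ¬ G.InducingPathBtw ∅ ∅ a b)

/-- `G` is an iMAG: an iPAG with no circle marks. -/
def IsIMAG (G : MixedGraph N) : Prop :=
  G.IsIPAG ∧ ∀ a b, G.mark a b ≠ some Mark.circle

/-- The visibility condition for a directed edge `a → b` of `G`: either `a` is an
input node, or some node `c` not adjacent to `b` satisfies `c *→ a`, or there is a
path `c *→ v₁ ↔ ⋯ ↔ v_{n−1} ↔ a` (`n ≥ 2`) with every `vᵢ` a parent of `b`. -/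
def VisibleCond (G : MixedGraph N) (a b : N) : Prop :=
  a ∈ G.inputs ∨
  ∃ c, c ≠ b ∧ ¬ G.adj c b ∧
    (G.mark a c = some Mark.arrow ∨
      ∃ w : GWalk G, w.IsPath ∧ 2 ≤ w.len ∧ w.first = c ∧ w.last = a ∧
        G.mark (w.f 1) (w.f 0) = some Mark.arrow ∧
        (∀ i, 1 ≤ i → i < w.len → G.bidir (w.f i) (w.f (i + 1))) ∧
        (∀ i, 1 ≤ i → i < w.len → G.dir (w.f i) b))

/-- `a → b` is a visible directed edge of `G`. -/
def VisibleDir (G : MixedGraph N) (a b : N) : Prop :=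
  G.dir a b ∧ G.VisibleCond a b

/-- `a` and `b` are in the same bucket of `G`: some path between them carries no
arrowhead mark on any of its edges. -/
def SameBucket (G : MixedGraph N) (a b : N) : Prop :=
  ∃ w : GWalk G, w.IsPath ∧ w.first = a ∧ w.last = b ∧
    ∀ i < w.len, G.mark (w.f i) (w.f (i + 1)) ≠ some Mark.arrow ∧
      G.mark (w.f (i + 1)) (w.f i) ≠ some Mark.arrow

end MixedGraph

/-- An isADMG: an iADMG together with its set `sel` of latent selection nodes.
The observed output nodes are `graph.outputs \ sel`. -/
structure SADMG (N : Type) where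
  graph : MixedGraph N
  sel : Set N

namespace SADMG

/-- Well-formedness of an isADMG. -/
def WF {N : Type} (A : SADMG N) : Prop :=
  A.graph.IsIADMG ∧ A.sel ⊆ A.graph.outputs

/-- The observed output nodes `O`. -/
def obs {N : Type} (A : SADMG N) : Set N := A.graph.outputs \ A.sel

end SADMG

/-- An ilsADMG: an iADMG together with its sets of latent output nodes and of
latent selection nodes.  The observed output nodes are the remaining outputs. -/
structure LSADMG (N : Type) where
  graph : MixedGraph N
  latent : Set N
  sel : Set N

namespace LSADMG

/-- Well-formedness of an ilsADMG. -/
def WF {N : Type} (A : LSADMG N) : Prop :=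
  A.graph.IsIADMG ∧ A.latent ⊆ A.graph.outputs ∧ A.sel ⊆ A.graph.outputs ∧
  Disjoint A.latent A.sel

/-- The observed output nodes `O`. -/
def obs {N : Type} (A : LSADMG N) : Set N := A.graph.outputs \ (A.latent ∪ A.sel)

end LSADMG

/-- An iPAG/iMAG `P` represents the isADMG `A`: nodes match; adjacency in `P`
corresponds exactly to `S`-inducing paths in `A` (with no edges inside the inputs);
arrowheads at `a` imply `a ∉ Anc_A({b} ∪ S)`; tails at `a` imply `a ∈ Anc_A({b} ∪ S)`. -/
def RepresentsS {N : Type} (P : MixedGraph N) (A : SADMG N) : Prop :=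
  P.inputs = A.graph.inputs ∧
  P.outputs = A.obs ∧
  (∀ a b, a ≠ b → a ∈ P.nodes → b ∈ P.nodes →
    (P.adj a b ↔
      (¬(a ∈ P.inputs ∧ b ∈ P.inputs) ∧ A.graph.InducingPathBtw ∅ A.sel a b))) ∧
  (∀ a b, P.mark a b = some Mark.arrow → a ∉ A.graph.ancSet ({b} ∪ A.sel)) ∧
  (∀ a b, P.mark a b = some Mark.tail → a ∈ A.graph.ancSet ({b} ∪ A.sel))

/-- An iPAG/iMAG `P` `(L,S)`-represents the ilsADMG `A`. -/
def RepresentsLS {N : Type} (P : MixedGraph N) (A : LSADMG N) : Prop :=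
  P.inputs = A.graph.inputs ∧
  P.outputs = A.obs ∧
  (∀ a b, a ≠ b → a ∈ P.nodes → b ∈ P.nodes →
    (P.adj a b ↔
      (¬(a ∈ P.inputs ∧ b ∈ P.inputs) ∧ A.graph.InducingPathBtw A.latent A.sel a b))) ∧
  (∀ a b, P.mark a b = some Mark.arrow → a ∉ A.graph.ancSet ({b} ∪ A.sel)) ∧
  (∀ a b, P.mark a b = some Mark.tail → a ∈ A.graph.ancSet ({b} ∪ A.sel))

/-- The explicit candidate for `MAG(A)` of an ilsADMG `A`: input nodes `I`, output
nodes `O`; distinct `a,b ∈ I ∪ O` adjacent iff `{a,b} ⊄ I` and there is an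
`(L,S)`-inducing path between them in `A`; the mark at `a` on each edge is a tail
if `a ∈ Anc_A({b} ∪ S)` and an arrowhead otherwise. -/
def magOfLS {N : Type} (A : LSADMG N) : MixedGraph N where
  inputs := A.graph.inputs
  outputs := A.obs
  mark := fun a b =>
    if a ≠ b ∧ a ∈ A.graph.inputs ∪ A.obs ∧ b ∈ A.graph.inputs ∪ A.obs ∧
        ¬(a ∈ A.graph.inputs ∧ b ∈ A.graph.inputs) ∧
        A.graph.InducingPathBtw A.latent A.sel a b then
      (if a ∈ A.graph.ancSet ({b} ∪ A.sel) then some Mark.tail else some Mark.arrow)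
    else none

/-- A walk is `C`-open (in a graph without circle marks): its endnodes are not in
`C`, no non-collider on it is in `C`, and every collider on it is in `Anc(C)`. -/
def COpen {N : Type} (H : MixedGraph N) (C : Set N) (w : GWalk H) : Prop :=
  w.first ∉ C ∧ w.last ∉ C ∧
  ∀ i, 0 < i → i < w.len →
    (¬ w.ColliderAt i → w.f i ∉ C) ∧ (w.ColliderAt i → w.f i ∈ H.ancSet C)

/-- `A` is id-separated from `B` given `C` in `H` (graphs without circle marks):
every path/walk from a node of `A` to a node of `B ∪ inputs` is not `C`-open. -/
def IdSepSimple {N : Type} (H : MixedGraph N) (A B C : Set N) : Prop :=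
  ∀ w : GWalk H, w.first ∈ A → w.last ∈ B ∪ H.inputs → ¬ COpen H C w

/-- A walk in a manipulated graph `H` (with set `DI` of regime input nodes) is
`C`-id-open. -/
def IdOpen {N : Type} (H : MixedGraph N) (DI C : Set N) (w : GWalk H) : Prop :=
  w.first ∉ C ∧ w.last ∉ C ∧
  ∀ i, 0 < i → i < w.len →
    (w.f i ∉ C ∧ (H.mark (w.f i) (w.f (i - 1)) = some Mark.tail ∨
        H.mark (w.f i) (w.f (i + 1)) = some Mark.tail)) ∨
    (w.f i ∉ C ∧ H.mark (w.f i) (w.f (i - 1)) = some Mark.circle ∧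
        H.mark (w.f i) (w.f (i + 1)) = some Mark.circle ∧
        ¬ H.adj (w.f (i - 1)) (w.f (i + 1))) ∨
    (w.ColliderAt i ∧ w.f (i - 1) ∉ DI ∧ w.f i ∉ DI ∧ w.f (i + 1) ∉ DI ∧
        w.f i ∈ H.ancSet C) ∨
    (w.ColliderAt i ∧ ¬(w.f (i - 1) ∉ DI ∧ w.f i ∉ DI ∧ w.f (i + 1) ∉ DI) ∧
        w.f i ∈ H.poAnSet (C ∩ H.outputs)) ∨
    (w.f (i - 1) ∈ DI ∧ H.mark (w.f i) (w.f (i - 1)) = some Mark.circle ∧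
        H.mark (w.f i) (w.f (i + 1)) = some Mark.arrow ∧
        w.f i ∈ H.poAnSet (C ∩ H.outputs)) ∨
    (w.f (i + 1) ∈ DI ∧ H.mark (w.f i) (w.f (i - 1)) = some Mark.arrow ∧
        H.mark (w.f i) (w.f (i + 1)) = some Mark.circle ∧
        w.f i ∈ H.poAnSet (C ∩ H.outputs))

/-- `A` is id-separated from `B` given `C` in the manipulated graph `H`, whose set
of regime input nodes is `DI`: every path/walk from a node of `A` to a node of
`B ∪ inputs` is not `C`-id-open. -/
def IdSep {N : Type} (H : MixedGraph N) (DI A B C : Set N) : Prop :=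
  ∀ w : GWalk H, w.first ∈ A → w.last ∈ B ∪ H.inputs → ¬ IdOpen H DI C w

/-- Hard manipulation `do(T)` of an isADMG-type graph: reclassify the nodes of `T`
as input nodes and delete every edge with an arrowhead at a node of `T`. -/
def admgHardManip {N : Type} (G : MixedGraph N) (T : Set N) : MixedGraph N where
  inputs := G.inputs ∪ (T ∩ G.outputs)
  outputs := G.outputs \ T
  mark := fun x y =>
    if (x ∈ T ∧ G.mark x y = some Mark.arrow) ∨
        (y ∈ T ∧ G.mark y x = some Mark.arrow) then none
    else G.mark x y

/-- Soft manipulation `do(I_D)` of an isADMG-type graph: add a fresh input node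
`I_d = Sum.inr d` and the directed edge `I_d → d` for each `d ∈ D`. -/
def admgSoftManip {N : Type} (G : MixedGraph N) (D : Set N) : MixedGraph (N ⊕ N) where
  inputs := Sum.inl '' G.inputs ∪ Sum.inr '' D
  outputs := Sum.inl '' G.outputs
  mark := fun x y =>
    match x, y with
    | Sum.inl a, Sum.inl b => G.mark a b
    | Sum.inr d, Sum.inl a => if d ∈ D ∧ a = d then some Mark.tail else none
    | Sum.inl a, Sum.inr d => if d ∈ D ∧ a = d then some Mark.arrow else none
    | Sum.inr _, Sum.inr _ => none

/-- Soft manipulation of an isADMG. -/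
def SADMG.softManip {N : Type} (A : SADMG N) (D : Set N) : SADMG (N ⊕ N) where
  graph := admgSoftManip A.graph D
  sel := Sum.inl '' A.sel

/-- Hard manipulation `do(T)` of an iMAG-type graph: input nodes `I ∪ (T ∩ V)`,
output nodes `V \ T`; delete all edges with an arrowhead at a node of `T \ I` and
all edges between two nodes of `T ∪ I`. -/
def magHardManip {N : Type} (G : MixedGraph N) (T : Set N) : MixedGraph N where
  inputs := G.inputs ∪ (T ∩ G.outputs)
  outputs := G.outputs \ T
  mark := fun x y =>
    if (x ∈ T ∧ x ∉ G.inputs ∧ G.mark x y = some Mark.arrow) ∨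
        (y ∈ T ∧ y ∉ G.inputs ∧ G.mark y x = some Mark.arrow) ∨
        ((x ∈ T ∨ x ∈ G.inputs) ∧ (y ∈ T ∨ y ∈ G.inputs)) then none
    else G.mark x y

/-- The mark at node `y` on the new edge between the regime node `I_a = Sum.inr a`
and `y` in the soft manipulation of an iMAG-type graph `G` over `N ⊕ N`
(`none` if there is no such edge): `I_a → a` if some edge of `G` has an arrowhead
at `a`; `I_a − a` if some undirected edge is at `a`; `I_a −∘ a` otherwise;
`I_a → b` for every output `b` with `a → b` invisible; `I_a − b` for every output
`b` with `a − b` in `G`. -/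
def magSoftTarget {N : Type} (G : MixedGraph (N ⊕ N)) (a : N) (y : N ⊕ N) : Option Mark :=
  if y = Sum.inl a then
    (if G.arrowAt (Sum.inl a) then some Mark.arrow
     else if ∃ c, G.undir (Sum.inl a) c then some Mark.tail
     else some Mark.circle)
  else if y ∈ G.outputs ∧ G.dir (Sum.inl a) y ∧ ¬ G.VisibleCond (Sum.inl a) y then
    some Mark.arrow
  else if y ∈ G.outputs ∧ G.undir (Sum.inl a) y then some Mark.tail
  else none

/-- The mark at node `y` on the new edge between the regime node `I_a = Sum.inr a`
and `y` in the soft manipulation of an iPAG-type graph `G` over `N ⊕ N`. -/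
def pagSoftTarget {N : Type} (G : MixedGraph (N ⊕ N)) (a : N) (y : N ⊕ N) : Option Mark :=
  if y = Sum.inl a then
    (if G.arrowAt (Sum.inl a) then some Mark.arrow
     else if ∃ c, G.undir (Sum.inl a) c then some Mark.tail
     else some Mark.circle)
  else if y ∈ G.outputs ∧ ((G.dir (Sum.inl a) y ∧ ¬ G.VisibleCond (Sum.inl a) y) ∨
      G.circArrow (Sum.inl a) y) then some Mark.arrow
  else if y ∈ G.outputs ∧ (G.undir (Sum.inl a) y ∨
      (G.circTail (Sum.inl a) y ∧ ∃ c, G.undir c y)) then some Mark.tail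
  else if y ∈ G.outputs ∧ (G.tailCirc (Sum.inl a) y ∨ G.circCirc (Sum.inl a) y ∨
      (G.circTail (Sum.inl a) y ∧ ¬ ∃ c, G.undir c y)) then some Mark.circle
  else none

/-- Generic soft-manipulation step on a graph over `N ⊕ N`: for each `a ∈ A` not
already an input, the regime node `I_a = Sum.inr a` is added as an input node,
with edges (and end marks) prescribed by `target`; the mark at `I_a` on each new
edge is a tail. -/
def softManipStep {N : Type}
    (target : MixedGraph (N ⊕ N) → N → (N ⊕ N) → Option Mark)
    (G : MixedGraph (N ⊕ N)) (A : Set N) : MixedGraph (N ⊕ N) where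
  inputs := G.inputs ∪ Sum.inr '' {a | a ∈ A ∧ Sum.inl a ∉ G.inputs}
  outputs := G.outputs
  mark := fun x y =>
    match x, y with
    | Sum.inr a, Sum.inr b =>
        if a ∈ A ∧ Sum.inl a ∉ G.inputs then
          (if (target G a (Sum.inr b)).isSome then some Mark.tail else none)
        else if b ∈ A ∧ Sum.inl b ∉ G.inputs then target G b (Sum.inr a)
        else G.mark x y
    | Sum.inr a, Sum.inl v =>
        if a ∈ A ∧ Sum.inl a ∉ G.inputs then
          (if (target G a (Sum.inl v)).isSome then some Mark.tail else none)
        else G.mark x y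
    | Sum.inl v, Sum.inr a =>
        if a ∈ A ∧ Sum.inl a ∉ G.inputs then target G a (Sum.inl v)
        else G.mark x y
    | Sum.inl _, Sum.inl _ => G.mark x y

/-- Soft-manipulation step for iMAG-type graphs over `N ⊕ N`. -/
def magSoftManipStep {N : Type} (G : MixedGraph (N ⊕ N)) (A : Set N) :
    MixedGraph (N ⊕ N) :=
  softManipStep magSoftTarget G A

/-- The soft-manipulated iMAG `M_{do(I_A)}`, over node type `N ⊕ N`. -/
def magSoftManip {N : Type} (M : MixedGraph N) (A : Set N) : MixedGraph (N ⊕ N) :=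
  magSoftManipStep M.sumInl A

/-- The soft-manipulated iPAG `P_{do(I_A)}`, over node type `N ⊕ N`. -/
def pagSoftManip {N : Type} (P : MixedGraph N) (A : Set N) : MixedGraph (N ⊕ N) :=
  softManipStep pagSoftTarget P.sumInl A

/-- Hard manipulation `do(T)` of an iPAG-type graph: as for iMAGs, but in addition
every remaining circle mark at a manipulated node is replaced by a tail. -/
def pagHardManip {N : Type} (G : MixedGraph N) (T : Set N) : MixedGraph N where
  inputs := G.inputs ∪ T
  outputs := G.outputs \ T
  mark := fun x y =>
    if (x ∈ T ∧ x ∉ G.inputs ∧ G.mark x y = some Mark.arrow) ∨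
        (y ∈ T ∧ y ∉ G.inputs ∧ G.mark y x = some Mark.arrow) ∨
        ((x ∈ T ∨ x ∈ G.inputs) ∧ (y ∈ T ∨ y ∈ G.inputs)) then none
    else if x ∈ T ∧ x ∉ G.inputs ∧ y ∈ G.outputs ∧ y ∉ T ∧
        G.mark x y = some Mark.circle then some Mark.tail
    else G.mark x y

/-- Orient all circle marks of `G` as tails. -/
def orientCirclesTails {N : Type} (G : MixedGraph N) : MixedGraph N :=
  { G with
    mark := fun x y =>
      (G.mark x y).map (fun m => if m = Mark.circle then Mark.tail else m) }

/-- There is a pc-connecting path from `a` to `b` in `G`: a single edge between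
`a` and `b` that is not a visible directed edge, or a path
`a *→ v₁ ↔ ⋯ ↔ v_{n−1} ←* b` (`n > 1`) none of whose edges is visible directed. -/
def PcConn {N : Type} (G : MixedGraph N) (a b : N) : Prop :=
  (G.adj a b ∧ ¬ G.VisibleDir a b ∧ ¬ G.VisibleDir b a) ∨
  (∃ w : GWalk G, w.IsPath ∧ 1 < w.len ∧ w.first = a ∧ w.last = b ∧
    G.mark (w.f 1) (w.f 0) = some Mark.arrow ∧
    G.mark (w.f (w.len - 1)) (w.f w.len) = some Mark.arrow ∧
    (∀ i, 1 ≤ i → i < w.len - 1 → G.bidir (w.f i) (w.f (i + 1))) ∧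
    (∀ i < w.len, ¬ G.VisibleDir (w.f i) (w.f (i + 1)) ∧
      ¬ G.VisibleDir (w.f (i + 1)) (w.f i)))

/-- The pc-component of `b` in `G`. -/
def pcSet {N : Type} (G : MixedGraph N) (b : N) : Set N := {a | PcConn G a b}

/-- The region of a set `B` in `G`: all nodes in the bucket of some node
pc-connected to a node of `B`. -/
def regionSet {N : Type} (G : MixedGraph N) (B : Set N) : Set N :=
  {a | ∃ b ∈ B, ∃ c, PcConn G c b ∧ G.SameBucket a c}

/-- `S` is a bucket of `G`. -/
def IsBucket {N : Type} (G : MixedGraph N) (S : Set N) : Prop :=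
  ∃ a ∈ G.nodes, S = {x | G.SameBucket x a}

/-- FCI rule R1 (closure form): if `k *→ j` with the edge between `j` and `i`
carrying a circle at `j`, `i` and `k` non-adjacent and `i` not an input node,
then that edge is `j → i`. -/
def FciR1 {N : Type} (P : MixedGraph N) : Prop :=
  ∀ i j k, P.mark j k = some Mark.arrow → ¬ P.adj i k → i ∉ P.inputs →
    P.mark j i = some Mark.circle → P.dir j i

/-- FCI rule R2 (closure form): if `i → j *→ k` or `i *→ j → k` with the edge
between `i` and `k` carrying a circle at `k`, then that edge has an arrowhead at `k`. -/
def FciR2 {N : Type} (P : MixedGraph N) : Prop :=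
  ∀ i j k, ((P.dir i j ∧ P.mark k j = some Mark.arrow) ∨
      (P.mark j i = some Mark.arrow ∧ P.dir j k)) →
    P.mark k i = some Mark.circle → P.mark k i = some Mark.arrow

/-- FCI rule R4 (closure form): for every discriminating path `⟨a,…,y,z⟩` for `y`,
the mark at `y` on the edge between `y` and `z` is not a circle. -/
def FciR4 {N : Type} (P : MixedGraph N) : Prop :=
  ∀ w : GWalk P, w.IsPath → 3 ≤ w.len → ¬ P.adj (w.f 0) (w.f w.len) →
    (∀ i, 0 < i → i < w.len - 1 → w.ColliderAt i ∧ P.dir (w.f i) (w.f w.len)) →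
    P.mark (w.f (w.len - 1)) (w.f w.len) ≠ some Mark.circle

/-- Property (P2) of iSOPAGs: no `a *→ b` together with `b −∘ c`, and no
`a *→ b` together with `b ∘− c`. -/
def SopagP2 {N : Type} (P : MixedGraph N) : Prop :=
  ∀ a b c, P.mark b a = some Mark.arrow → ¬ P.tailCirc b c ∧ ¬ P.circTail b c

/-- Property (P3) of iSOPAGs: if `a *→ b` and the edge between `b` and `c` has a
circle at `b`, then `a *→ c`. -/
def SopagP3 {N : Type} (P : MixedGraph N) : Prop :=
  ∀ a b c, P.mark b a = some Mark.arrow → P.mark b c = some Mark.circle →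
    P.mark c a = some Mark.arrow

/-- `P` is an iSOPAG: an iPAG representing some isADMG, closed under the FCI
orientation rules (R1, R2, R4), and satisfying (P2) and (P3). -/
def IsISOPAG {N : Type} (P : MixedGraph N) : Prop :=
  P.IsIPAG ∧ (∃ A : SADMG N, A.WF ∧ RepresentsS P A) ∧
  FciR1 P ∧ FciR2 P ∧ FciR4 P ∧ SopagP2 P ∧ SopagP3 P

/-! The heart of the matter is that an iSOPAG has no closed walk whose edges carry no
arrowhead at their earlier endpoint but at least one arrowhead at a later endpoint.
In a shortest such cycle, an edge `p ∘→ q` or `p → q` is always followed by a directed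
edge `q → r`: a circle at `q` would give, by (P3) and R2, an edge `p ∘→ r` or `p → r`
and hence a shorter cycle, while a tail at `q` forces `q → r` by (P2) and the iPAG
axioms. So the shortest cycle is directed, which is impossible. Consequently every edge
of a closed potentially directed walk is arrowless, so nodes that are possible
ancestors of each other lie in the same bucket. All properties involved pass to induced
subgraphs, so the same holds in `P_D`, and the transitive closure of
"`𝔸 ⊆ PoAn(𝔹)`" is a strict order on the buckets of `P_D`. -/

inductive NSteps {α : Type*} (R : α → α → Prop) : ℕ → α → α → Prop
  | refl (a : α) : NSteps R 0 a a
  | head {n : ℕ} {a b c : α} : R a b → NSteps R n b c → NSteps R (n + 1) a c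

namespace NSteps

variable {α : Type*} {R : α → α → Prop} {a b c : α} {m n : ℕ}

theorem trans (h₁ : NSteps R m a b) (h₂ : NSteps R n b c) : NSteps R (m + n) a c := by
  induction h₁ with
  | refl => simpa using h₂
  | head hab _ ih => rw [Nat.add_right_comm]; exact .head hab (ih h₂)

theorem single (h : R a b) : NSteps R 1 a b := .head h (.refl b)

theorem tail (h₁ : NSteps R n a b) (h₂ : R b c) : NSteps R (n + 1) a c :=
  h₁.trans (single h₂)

theorem exists_of_reflTransGen (h : Relation.ReflTransGen R a b) : ∃ n, NSteps R n a b := by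
  induction h using Relation.ReflTransGen.head_induction_on with
  | refl => exact ⟨0, .refl _⟩
  | head hac _ ih => obtain ⟨n, hn⟩ := ih; exact ⟨n + 1, .head hac hn⟩

end NSteps

theorem Relation.reflTransGen_of_mutual_reflTransGen {α : Type*}
    {Q E : α → α → Prop} (hE : ∀ x y, Q x y → Relation.ReflTransGen Q y x → E x y)
    {a b : α} (hab : Relation.ReflTransGen Q a b) (hba : Relation.ReflTransGen Q b a) :
    Relation.ReflTransGen E a b := by
  induction hab using Relation.ReflTransGen.head_induction_on with
  | refl => exact .refl
  | head hac hcb ih => exact .head (hE _ _ hac (hcb.trans hba)) (ih (hba.tail hac))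

namespace GWalk

variable {N : Type} {G : MixedGraph N}

def nil (a : N) : GWalk G := ⟨0, fun _ => a, fun _ h => absurd h (Nat.not_lt_zero _)⟩

def cons (a : N) (w : GWalk G) (h : G.adj a w.first) : GWalk G where
  len := w.len + 1
  f
    | 0 => a
    | i + 1 => w.f i
  hadj
    | 0, _ => h
    | i + 1, hi => w.hadj i (by omega)

def drop (w : GWalk G) (k : ℕ) : GWalk G where
  len := w.len - k
  f i := w.f (i + k)
  hadj i hi := by simpa [Nat.add_right_comm] using w.hadj (i + k) (by omega)

theorem isPath_nil (a : N) : (nil a : GWalk G).IsPath := by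
  intro i hi j hj _
  simp_all [nil]

theorem IsPath.drop {w : GWalk G} (hw : w.IsPath) {k : ℕ} (hk : k ≤ w.len) :
    (w.drop k).IsPath := by
  intro i hi j hj h
  simp only [GWalk.drop] at hi hj h
  have := hw (i + k) (by omega) (j + k) (by omega) h
  omega

theorem IsPath.cons {w : GWalk G} (hw : w.IsPath) {a : N} (h : G.adj a w.first)
    (ha : ∀ k ≤ w.len, w.f k ≠ a) : (w.cons a h).IsPath := by
  rintro (_ | i) hi (_ | j) hj hij
  · rfl
  · exact absurd hij.symm (ha j (by simp [GWalk.cons] at hj; omega))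
  · exact absurd hij (ha i (by simp [GWalk.cons] at hi; omega))
  · simp only [GWalk.cons] at hij hi hj
    rw [hw i (by omega) j (by omega) hij]

theorem reflTransGen_of_forall {R : N → N → Prop} (w : GWalk G)
    (hR : ∀ i < w.len, R (w.f i) (w.f (i + 1))) : Relation.ReflTransGen R w.first w.last := by
  suffices ∀ n ≤ w.len, Relation.ReflTransGen R (w.f 0) (w.f n) from this _ le_rfl
  intro n hn
  induction n with
  | zero => exact .refl
  | succ n ih => exact (ih (by omega)).tail (hR n (by omega))

theorem exists_isPath_of_reflTransGen {R : N → N → Prop} (hR : ∀ x y, R x y → G.adj x y)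
    {a b : N} (h : Relation.ReflTransGen R a b) :
    ∃ w : GWalk G, w.IsPath ∧ w.first = a ∧ w.last = b ∧
      ∀ i < w.len, R (w.f i) (w.f (i + 1)) := by
  induction h using Relation.ReflTransGen.head_induction_on with
  | refl => exact ⟨nil b, isPath_nil b, rfl, rfl, fun i hi => absurd hi (Nat.not_lt_zero i)⟩
  | @head a c hac _ ih =>
    obtain ⟨w, hw, rfl, rfl, hwR⟩ := ih
    by_cases hmem : ∃ k ≤ w.len, w.f k = a
    · obtain ⟨k, hk, rfl⟩ := hmem
      refine ⟨w.drop k, hw.drop hk, by simp [GWalk.drop, first], ?_, fun i hi => ?_⟩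
      · simp only [GWalk.drop, last]; congr 1; omega
      · simp only [GWalk.drop] at hi ⊢
        simpa [Nat.add_right_comm] using hwR (i + k) (by omega)
    · push Not at hmem
      refine ⟨w.cons a (hR _ _ hac), hw.cons _ hmem, rfl, rfl, ?_⟩
      rintro (_ | i) hi
      · exact hac
      · exact hwR i (by simp [GWalk.cons] at hi; omega)

end GWalk

namespace MixedGraph

variable {N : Type} {G : MixedGraph N}

def noArrowAt (G : MixedGraph N) (x y : N) : Prop :=
  G.adj x y ∧ G.mark x y ≠ some Mark.arrow

/-- `x ∘→ y` or `x → y`. -/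
def semiDir (G : MixedGraph N) (x y : N) : Prop :=
  G.noArrowAt x y ∧ G.mark y x = some Mark.arrow

def noArrowEdge (G : MixedGraph N) (x y : N) : Prop :=
  G.adj x y ∧ G.mark x y ≠ some Mark.arrow ∧ G.mark y x ≠ some Mark.arrow

theorem noArrowAt.eq_tail_or_eq_circle {x y : N} (h : G.noArrowAt x y) :
    G.mark x y = some Mark.tail ∨ G.mark x y = some Mark.circle := by
  obtain ⟨hadj, hna⟩ := h
  unfold adj at hadj
  match G.mark x y, hadj, hna with
  | some Mark.tail, _, _ => exact .inl rfl
  | some Mark.circle, _, _ => exact .inr rfl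

theorem dir.semiDir {x y : N} (h : G.dir x y) : G.semiDir x y :=
  ⟨⟨by simp [adj, h.1], by simp [h.1]⟩, h.2⟩

theorem potDir.noArrowAt {x y : N} (h : G.potDir x y) : G.noArrowAt x y := ⟨h.1, h.2.1⟩

theorem noArrowEdge.noArrowAt {x y : N} (h : G.noArrowEdge x y) : G.noArrowAt x y :=
  ⟨h.1, h.2.1⟩

theorem sameBucket_iff {a b : N} :
    G.SameBucket a b ↔ Relation.ReflTransGen G.noArrowEdge a b := by
  constructor
  · rintro ⟨w, -, rfl, rfl, hw⟩
    exact w.reflTransGen_of_forall fun i hi => ⟨w.hadj i hi, hw i hi⟩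
  · intro h
    obtain ⟨w, hw, rfl, rfl, hR⟩ := GWalk.exists_isPath_of_reflTransGen (fun _ _ h => h.1) h
    exact ⟨w, hw, rfl, rfl, fun i hi => (hR i hi).2⟩

theorem reflTransGen_noArrowAt_of_sameBucket {a b : N} (h : G.SameBucket a b) :
    Relation.ReflTransGen G.noArrowAt a b :=
  Relation.ReflTransGen.mono (fun _ _ => noArrowEdge.noArrowAt) _ _ (sameBucket_iff.1 h)

theorem IsBucket.nonempty {X : Set N} (hX : IsBucket G X) : X.Nonempty := by
  obtain ⟨a, -, rfl⟩ := hX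
  exact ⟨a, sameBucket_iff.2 .refl⟩

theorem subset_poAnSet_trans {X Y Z : Set N} (hXY : X ⊆ G.poAnSet Y) (hYZ : Y ⊆ G.poAnSet Z) :
    X ⊆ G.poAnSet Z := by
  intro x hx
  obtain ⟨y, hy, hxy⟩ := hXY hx
  obtain ⟨z, hz, hyz⟩ := hYZ hy
  exact ⟨z, hz, hxy.trans hyz⟩

def bucketPrec (G : MixedGraph N) (X Y : Set N) : Prop :=
  IsBucket G X ∧ IsBucket G Y ∧ X ≠ Y ∧ X ⊆ G.poAnSet Y

theorem subset_poAnSet_of_reflTransGen {X Y : Set N}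
    (h : Relation.ReflTransGen G.bucketPrec X Y) : X ⊆ G.poAnSet Y := by
  induction h with
  | refl => exact fun x hx => ⟨x, hx, .refl⟩
  | tail _ hBY ih => exact subset_poAnSet_trans ih hBY.2.2.2

theorem mark_induce_eq_some {D : Set N} {a b : N} {m : Mark} :
    (G.induce D).mark a b = some m ↔ a ∈ D ∧ b ∈ D ∧ G.mark a b = some m := by
  simp only [induce]
  split_ifs with h <;> simp_all

theorem adj_induce {D : Set N} {a b : N} :
    (G.induce D).adj a b ↔ a ∈ D ∧ b ∈ D ∧ G.adj a b := by
  simp only [adj, induce]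
  split_ifs with h <;> simp_all

theorem dir_of_dir_induce {D : Set N} {a b : N} (h : (G.induce D).dir a b) : G.dir a b :=
  ⟨(mark_induce_eq_some.1 h.1).2.2, (mark_induce_eq_some.1 h.2).2.2⟩

theorem anc_of_anc_induce {D : Set N} {a b : N} (h : (G.induce D).anc a b) : G.anc a b :=
  Relation.ReflTransGen.mono (fun _ _ => dir_of_dir_induce) _ _ h

structure OrientationRules (G : MixedGraph N) : Prop where
  adj_symm : ∀ a b, G.adj a b → G.adj b a
  acyclic : ∀ a b, G.dir a b → ¬ G.anc b a
  not_undir_of_arrow : ∀ a b c, G.mark b a = some Mark.arrow → ¬ G.undir b c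
  fciR2 : FciR2 G
  p2 : SopagP2 G
  p3 : SopagP3 G

end MixedGraph

open MixedGraph

theorem IsISOPAG.orientationRules {N : Type} {P : MixedGraph N} (hP : IsISOPAG P) :
    P.OrientationRules := by
  obtain ⟨hPAG, -, -, hR2, -, hP2, hP3⟩ := hP
  obtain ⟨⟨-, -, -, hsymm, -, -⟩, -, -, hacyclic, -, hundir, -⟩ := hPAG
  exact ⟨hsymm, hacyclic, hundir, hR2, hP2, hP3⟩

namespace MixedGraph.OrientationRules

variable {N : Type} {G : MixedGraph N} (hG : G.OrientationRules)
include hG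

theorem induce (D : Set N) : (G.induce D).OrientationRules where
  adj_symm a b h := by
    rw [adj_induce] at h ⊢
    exact ⟨h.2.1, h.1, hG.adj_symm a b h.2.2⟩
  acyclic a b h hba := hG.acyclic a b (dir_of_dir_induce h) (anc_of_anc_induce hba)
  not_undir_of_arrow a b c h hbc := hG.not_undir_of_arrow a b c
    (mark_induce_eq_some.1 h).2.2
    ⟨(mark_induce_eq_some.1 hbc.1).2.2, (mark_induce_eq_some.1 hbc.2).2.2⟩
  fciR2 i j k h hki := by
    simp only [dir, mark_induce_eq_some] at h hki ⊢
    have := hG.fciR2 i j k (by tauto) hki.2.2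
    tauto
  p2 a b c h := by
    simp only [tailCirc, circTail, mark_induce_eq_some] at h ⊢
    have := hG.p2 a b c h.2.2
    simp only [tailCirc, circTail] at this
    tauto
  p3 a b c h hbc := by
    rw [mark_induce_eq_some] at h hbc ⊢
    exact ⟨hbc.2.1, h.2.1, hG.p3 a b c h.2.2 hbc.2.2⟩

/-- A circle at `q` hands the arrowhead on to `r` by (P3) and R2; after a tail at `q`,
(P2) and the iPAG axioms leave only an arrowhead at `r`. -/
theorem dir_or_semiDir {p q r : N} (hpq : G.semiDir p q) (hqr : G.noArrowAt q r) :
    G.dir q r ∨ G.semiDir p r := by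
  rcases hqr.eq_tail_or_eq_circle with hq | hq
  · left
    refine ⟨hq, ?_⟩
    have hr : (G.mark r q).isSome := hG.adj_symm q r hqr.1
    cases hm : G.mark r q with
    | none => simp [hm] at hr
    | some m =>
      cases m with
      | arrow => rfl
      | tail => exact absurd ⟨hq, hm⟩ (hG.not_undir_of_arrow p q r hpq.2)
      | circle => exact absurd ⟨hq, hm⟩ (hG.p2 p q r hpq.2).1
  · right
    have hrp := hG.p3 p q r hpq.2 hq
    refine ⟨⟨hG.adj_symm r p (by simp [adj, hrp]), fun hpr => ?_⟩, hrp⟩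
    rcases hpq.1.eq_tail_or_eq_circle with hp | hp
    · simpa [hq] using hG.fciR2 r p q (.inr ⟨hpr, hp, hpq.2⟩) hq
    · simpa [hq] using hG.p3 r p q hpr hp

/-- Walking along a shortest cycle `p ∘→ q ⇝ u ∘→ v ⇝ p`: every shortcut offered by
`dir_or_semiDir` would shorten the cycle, so the edges after `q` are directed and the
cycle closes into a directed one. -/
theorem not_nSteps_of_anc {L : ℕ}
    (hmin : ∀ k < L, ∀ {p q : N}, G.semiDir p q → ¬ NSteps G.noArrowAt k q p)
    {p q u v : N} {r s : ℕ} (hpq : G.semiDir p q) (huv : G.semiDir u v) (hqv : G.anc q v)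
    (hqu : NSteps G.noArrowAt s q u) (hL : r + s + 1 = L) : ¬ NSteps G.noArrowAt r v p := by
  intro hvp
  induction hvp generalizing u s with
  | refl =>
    rcases hG.dir_or_semiDir huv hpq.1 with hdir | huq
    · exact hG.acyclic _ _ hdir hqv
    · exact hmin s (by omega) huq hqu
  | head hvw hwp ih =>
    rcases hG.dir_or_semiDir huv hvw with hdir | huw
    · exact ih hpq hdir.semiDir (hqv.tail hdir) (hqu.tail huv.1) (by omega)
    · exact hmin _ (by omega) huw ((hwp.tail hpq.1).trans hqu)

theorem not_nSteps_of_semiDir (L : ℕ) {p q : N} (hpq : G.semiDir p q) :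
    ¬ NSteps G.noArrowAt L q p := by
  induction L using Nat.strong_induction_on generalizing p q with
  | _ L ih =>
  intro hqp
  cases hqp with
  | refl => exact hpq.1.2 hpq.2
  | head hqw hwp =>
    rcases hG.dir_or_semiDir hpq hqw with hdir | hpw
    · exact hG.not_nSteps_of_anc ih hpq hdir.semiDir (.single hdir) (.refl q) rfl hwp
    · exact ih _ (by omega) hpw hwp

theorem sameBucket_of_reflTransGen {a b : N} (hab : Relation.ReflTransGen G.noArrowAt a b)
    (hba : Relation.ReflTransGen G.noArrowAt b a) : G.SameBucket a b := by
  refine sameBucket_iff.2 (Relation.reflTransGen_of_mutual_reflTransGen ?_ hab hba)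
  intro x y hxy hyx
  obtain ⟨n, hn⟩ := NSteps.exists_of_reflTransGen hyx
  exact ⟨hxy.1, hxy.2, fun hyx => hG.not_nSteps_of_semiDir n ⟨hxy, hyx⟩ hn⟩

theorem noArrowEdge_symm {a b : N} (h : G.noArrowEdge a b) : G.noArrowEdge b a :=
  ⟨hG.adj_symm a b h.1, h.2.2, h.2.1⟩

theorem sameBucket_equivalence : Equivalence G.SameBucket := by
  have : Std.Symm G.noArrowEdge := ⟨fun _ _ => hG.noArrowEdge_symm⟩
  rw [show G.SameBucket = Relation.ReflTransGen G.noArrowEdge from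
    funext₂ fun _ _ => propext sameBucket_iff]
  exact ⟨fun _ => .refl, (Std.Symm.symm _ _ ·), .trans⟩

theorem sameBucket_of_mem {X : Set N} (hX : IsBucket G X) {a b : N} (ha : a ∈ X)
    (hb : b ∈ X) : G.SameBucket a b := by
  obtain ⟨α, -, rfl⟩ := hX
  have e := hG.sameBucket_equivalence
  exact e.trans ha (e.symm hb)

theorem isBucket_eq {X Y : Set N} (hX : IsBucket G X) (hY : IsBucket G Y) {a b : N}
    (ha : a ∈ X) (hb : b ∈ Y) (hab : G.SameBucket a b) : X = Y := by
  obtain ⟨α, -, rfl⟩ := hX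
  obtain ⟨β, -, rfl⟩ := hY
  have e := hG.sameBucket_equivalence
  have hαβ : G.SameBucket α β := e.trans (e.trans (e.symm ha) hab) hb
  ext x
  exact ⟨fun hx => e.trans hx hαβ, fun hx => e.trans hx (e.symm hαβ)⟩

theorem eq_of_poAn_of_poAn {X Y : Set N} (hX : IsBucket G X) (hY : IsBucket G Y)
    {a a' b b' : N} (ha : a ∈ X) (hb : b ∈ Y) (hab : G.poAn a b)
    (hb' : b' ∈ Y) (ha' : a' ∈ X) (hba : G.poAn b' a') : X = Y := by
  have toNoArrowAt {x y : N} : G.poAn x y → Relation.ReflTransGen G.noArrowAt x y :=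
    Relation.ReflTransGen.mono (fun _ _ => potDir.noArrowAt) _ _
  have hbb' := reflTransGen_noArrowAt_of_sameBucket (hG.sameBucket_of_mem hY hb hb')
  have ha'a := reflTransGen_noArrowAt_of_sameBucket (hG.sameBucket_of_mem hX ha' ha)
  have hba : Relation.ReflTransGen G.noArrowAt b a := (hbb'.trans (toNoArrowAt hba)).trans ha'a
  exact hG.isBucket_eq hX hY ha hb (hG.sameBucket_of_reflTransGen (toNoArrowAt hab) hba)

theorem irrefl_transGen_bucketPrec (X : Set N) : ¬ Relation.TransGen G.bucketPrec X X := by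
  intro h
  obtain ⟨B, ⟨hX, hB, hne, hXB⟩, hBX⟩ := Relation.TransGen.head'_iff.1 h
  obtain ⟨a, ha⟩ := hX.nonempty
  obtain ⟨b, hb, hab⟩ := hXB ha
  obtain ⟨a', ha', hba'⟩ := subset_poAnSet_of_reflTransGen hBX hb
  exact hne (hG.eq_of_poAn_of_poAn hX hB ha hb hab hb ha' hba')

end MixedGraph.OrientationRules

theorem statement19_general {N : Type} (P : MixedGraph N) (hP : IsISOPAG P)
    (D : Set N) :
    (∃ lt : Set N → Set N → Prop,
      (∀ X, ¬ lt X X) ∧ (∀ X Y Z, lt X Y → lt Y Z → lt X Z) ∧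
      (∀ Bk1 Bk2 : Set N, IsBucket (P.induce D) Bk1 → IsBucket (P.induce D) Bk2 →
        Bk1 ≠ Bk2 → Bk1 ⊆ (P.induce D).poAnSet Bk2 → lt Bk1 Bk2)) ∧
    (∀ Bk1 Bk2 : Set N, IsBucket (P.induce D) Bk1 → IsBucket (P.induce D) Bk2 →
      Bk1 ≠ Bk2 →
      ¬ ((∃ a ∈ Bk1, ∃ b ∈ Bk2, (P.induce D).poAn a b) ∧
          (∃ b ∈ Bk2, ∃ a ∈ Bk1, (P.induce D).poAn b a))) := by
  have hG := hP.orientationRules.induce D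
  refine ⟨⟨Relation.TransGen (P.induce D).bucketPrec, hG.irrefl_transGen_bucketPrec,
    fun _ _ _ => .trans, fun _ _ hX hY hne hXY => .single ⟨hX, hY, hne, hXY⟩⟩, ?_⟩
  rintro X Y hX hY hne ⟨⟨a, ha, b, hb, hab⟩, b', hb', a', ha', hba⟩
  exact hne (hG.eq_of_poAn_of_poAn hX hY ha hb hab hb' ha' hba)

/-- Let `P` be an iSOPAG and `D ⊆ I ∪ V`.  There exists a strict
partial order on the buckets of `P_D` such that `𝔸 ≺ 𝔹` whenever
`𝔸 ⊆ PoAn_{P_D}(𝔹)` for distinct buckets `𝔸, 𝔹`; in particular, it cannot happen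
simultaneously that a potentially directed path runs from a node of `𝔸` to a node
of `𝔹` and one runs from a node of `𝔹` to a node of `𝔸`. -/
theorem statement19 {N : Type} (P : MixedGraph N) (hP : IsISOPAG P)
    (D : Set N) (hD : D ⊆ P.nodes) :
    (∃ lt : Set N → Set N → Prop,
      (∀ X, ¬ lt X X) ∧ (∀ X Y Z, lt X Y → lt Y Z → lt X Z) ∧
      (∀ Bk1 Bk2 : Set N, IsBucket (P.induce D) Bk1 → IsBucket (P.induce D) Bk2 →
        Bk1 ≠ Bk2 → Bk1 ⊆ (P.induce D).poAnSet Bk2 → lt Bk1 Bk2)) ∧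
    (∀ Bk1 Bk2 : Set N, IsBucket (P.induce D) Bk1 → IsBucket (P.induce D) Bk2 →
      Bk1 ≠ Bk2 →
      ¬ ((∃ a ∈ Bk1, ∃ b ∈ Bk2, (P.induce D).poAn a b) ∧
          (∃ b ∈ Bk2, ∃ a ∈ Bk1, (P.induce D).poAn b a))) :=
  statement19_general P hP D

end
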